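/- arXiv:1903.04060 — 4 statements merged into one kernel-verified Lean document; each statement's English description precedes it below -/
import Mathlib

section
/- Define the sequence of cumulative quantities by X₀ = 0 and X_t = (n_t·X̄_c + X_{t-1})/(1 + n_t) for t = 1,…,T, where n_t ≥ 0 are natural numbers and X̄_c > 0. Then X_T = (1 - 1/∏_{s=1}^T (1+n_s))·X̄_c. -/
/-- Recursion `X₀ = 0`, `X_t = (n_t X̄_c + X_{t-1})/(1+n_t)` gives
`X_T = (1 - 1/∏_{s=1}^T (1+n_s)) X̄_c`. -/
theorem stmt_2 (Xc : ℝ) (hXc : 0 < Xc) (n : ℕ → ℕ) (X : ℕ → ℝ)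
    (h0 : X 0 = 0)
    (hrec : ∀ t : ℕ, X (t + 1) = ((n (t + 1) : ℝ) * Xc + X t) / (1 + (n (t + 1) : ℝ)))
    (T : ℕ) :
    X T = (1 - 1 / ∏ s ∈ Finset.Icc 1 T, (1 + (n s : ℝ))) * Xc := by
  induction T with
  | zero => simp [h0]
  | succ t ih =>
    have hpos : (0:ℝ) < ∏ s ∈ Finset.Icc 1 t, (1 + (n s : ℝ)) :=
      Finset.prod_pos (fun s _ => by positivity)
    have hpos' : (0:ℝ) < 1 + (n (t+1) : ℝ) := by positivity
    rw [hrec t, ih, Finset.prod_Icc_succ_top (by omega : 1 ≤ t + 1)]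
    field_simp
    ring
end

section
/- With X₀ = 0 and X_t = (n_t·X̄_c + X_{t-1})/(1+n_t), the per-firm quantity in period t, defined as (X_t - X_{t-1})/n_t (for n_t ≥ 1), equals X̄_c/∏_{s=1}^t (1+n_s). -/
/-- With `X₀ = 0`, `X_t = (n_t X̄_c + X_{t-1})/(1+n_t)` and `n_t ≥ 1`, the
per-firm quantity `(X_t - X_{t-1})/n_t` equals `X̄_c/∏_{s=1}^t (1+n_s)`. -/
theorem stmt_3 (Xc : ℝ) (hXc : 0 < Xc) (n : ℕ → ℕ) (hn : ∀ t, 1 ≤ n t) (X : ℕ → ℝ)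
    (h0 : X 0 = 0)
    (hrec : ∀ t : ℕ, X (t + 1) = ((n (t + 1) : ℝ) * Xc + X t) / (1 + (n (t + 1) : ℝ)))
    (t : ℕ) (ht : 1 ≤ t) :
    (X t - X (t - 1)) / (n t : ℝ) = Xc / ∏ s ∈ Finset.Icc 1 t, (1 + (n s : ℝ)) := by
  have hpos : ∀ s, (0:ℝ) < 1 + (n s : ℝ) := fun s => by positivity
  have hprodpos : ∀ k, (0:ℝ) < ∏ s ∈ Finset.Icc 1 k, (1 + (n s : ℝ)) :=
    fun k => Finset.prod_pos fun s _ => hpos s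
  have key : ∀ k, Xc - X k = Xc / ∏ s ∈ Finset.Icc 1 k, (1 + (n s : ℝ)) := by
    intro k
    induction k with
    | zero => simp [h0]
    | succ m ih =>
      have hP := (hprodpos m).ne'
      have hprod : ∏ s ∈ Finset.Icc 1 (m+1), (1 + (n s : ℝ))
          = (∏ s ∈ Finset.Icc 1 m, (1 + (n s : ℝ))) * (1 + (n (m+1) : ℝ)) := by
        rw [Finset.prod_Icc_succ_top (Nat.le_add_left 1 m)]
      rw [hrec m, hprod]
      have ih' : (Xc - X m) * ∏ s ∈ Finset.Icc 1 m, (1 + (n s : ℝ)) = Xc := by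
        rw [ih]; field_simp
      field_simp
      linear_combination ih'
  obtain ⟨m, rfl⟩ : ∃ m, t = m + 1 := ⟨t - 1, (Nat.succ_pred_eq_of_pos ht).symm⟩
  have hP := (hprodpos m).ne'
  have hnpos : (0:ℝ) < (n (m+1) : ℝ) := by exact_mod_cast hn (m+1)
  have hprod : ∏ s ∈ Finset.Icc 1 (m+1), (1 + (n s : ℝ))
      = (∏ s ∈ Finset.Icc 1 m, (1 + (n s : ℝ))) * (1 + (n (m+1) : ℝ)) := by
    rw [Finset.prod_Icc_succ_top (Nat.le_add_left 1 m)]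
  have h1 := key m
  have h2 := key (m+1)
  rw [hprod] at h2 ⊢
  simp only [Nat.add_sub_cancel]
  have hd : X (m+1) - X m = (Xc - X m) - (Xc - X (m+1)) := by ring
  rw [hd, h1, h2]
  field_simp
  ring
end

section
/- Let P : [0, X̄] → ℝ be continuous and satisfy, for all X in (0, X̄/2] and all natural numbers n ≥ 1, the functional equation P(2X) − P(X) = n·[P(X + X/n) − P(X)]. Then, if P is differentiable, for all X ∈ (0, X̄/2]: P'(X) = (1/X)·(P(2X) − P(X)). -/
/-- If `P` satisfies `P(2X) - P(X) = n[P(X + X/n) - P(X)]` for all `X ∈ (0, X̄/2]`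
and all `n ≥ 1`, and `P` is differentiable, then
`P'(X) = (1/X)(P(2X) - P(X))` on `(0, X̄/2]`. -/
theorem stmt_15 (Xb : ℝ) (hXb : 0 < Xb) (P : ℝ → ℝ)
    (hcont : ContinuousOn P (Set.Icc 0 Xb))
    (hfe : ∀ X ∈ Set.Ioc (0 : ℝ) (Xb / 2), ∀ n : ℕ, 1 ≤ n →
      P (2 * X) - P X = (n : ℝ) * (P (X + X / n) - P X))
    (hdiff : ∀ X ∈ Set.Ioc (0 : ℝ) (Xb / 2), DifferentiableAt ℝ P X) :
    ∀ X ∈ Set.Ioc (0 : ℝ) (Xb / 2), deriv P X = (1 / X) * (P (2 * X) - P X) := by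
  intro X hX
  have hX0 : 0 < X := hX.1
  have hd := (hdiff X hX).hasDerivAt
  rw [hasDerivAt_iff_tendsto_slope] at hd
  -- the sequence y n = X + X/n tends to X within {X}ᶜ
  have hseq : Filter.Tendsto (fun n : ℕ => X + X / n) Filter.atTop (nhdsWithin X {X}ᶜ) := by
    rw [tendsto_nhdsWithin_iff]
    constructor
    · have : Filter.Tendsto (fun n : ℕ => X / n) Filter.atTop (nhds 0) :=
        tendsto_const_div_atTop_nhds_zero_nat X
      simpa using (tendsto_const_nhds.add this)
    · filter_upwards [Filter.eventually_ge_atTop 1] with n hn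
      have hn0 : (0 : ℝ) < n := by exact_mod_cast hn
      simp only [Set.mem_compl_iff, Set.mem_singleton_iff]
      have : X / n ≠ 0 := by positivity
      intro h
      apply this
      linarith
  have hlim : Filter.Tendsto (fun n : ℕ => slope P X (X + X / n)) Filter.atTop
      (nhds (deriv P X)) := hd.comp hseq
  have hconst : ∀ᶠ n : ℕ in Filter.atTop,
      slope P X (X + X / n) = (1 / X) * (P (2 * X) - P X) := by
    filter_upwards [Filter.eventually_ge_atTop 1] with n hn
    have hn0 : (0 : ℝ) < n := by exact_mod_cast hn
    have hXn : (X / n : ℝ) ≠ 0 := by positivity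
    have hfeX := hfe X hX n hn
    rw [slope_def_field, div_eq_iff (by linarith [div_pos hX0 hn0] : X + X / n - X ≠ 0)]
    have h1 : X + X / n - X = X / n := by ring
    rw [h1, hfeX]
    field_simp
  have hlim2 : Filter.Tendsto (fun n : ℕ => slope P X (X + X / n)) Filter.atTop
      (nhds ((1 / X) * (P (2 * X) - P X))) :=
    Filter.Tendsto.congr' (Filter.EventuallyEq.symm hconst) tendsto_const_nhds
  exact tendsto_nhds_unique hlim hlim2
end

section
/- Let P : [0, X̄] → ℝ be continuously differentiable and satisfy P(2X) − P(X) = 2·[P(X) − P(X/2)] for all X with 2X ≤ X̄, and P'(X) = (1/X)(P(2X) − P(X)) for all X ∈ (0, X̄/2]. Then P'(X) = P'(0) for all X ∈ (0, X̄/2], and hence P(X) = P(0) + P'(0)·X on [0, X̄/2]. -/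
/-- If `P` is continuously differentiable on `[0, X̄]`, satisfies the doubling
identity and `P'(X) = (1/X)(P(2X) - P(X))` on `(0, X̄/2]`, then `P' ≡ P'(0)` on
`(0, X̄/2]` and `P` is affine on `[0, X̄/2]`. -/
theorem stmt_16 (Xb : ℝ) (hXb : 0 < Xb) (P : ℝ → ℝ)
    (hP : ContDiffOn ℝ 1 P (Set.Icc 0 Xb))
    (hdouble : ∀ X : ℝ, 0 ≤ X → 2 * X ≤ Xb →
      P (2 * X) - P X = 2 * (P X - P (X / 2)))
    (hderiv : ∀ X ∈ Set.Ioc (0 : ℝ) (Xb / 2),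
      derivWithin P (Set.Icc 0 Xb) X = (1 / X) * (P (2 * X) - P X)) :
    (∀ X ∈ Set.Ioc (0 : ℝ) (Xb / 2),
      derivWithin P (Set.Icc 0 Xb) X = derivWithin P (Set.Icc 0 Xb) 0) ∧
    (∀ X ∈ Set.Icc (0 : ℝ) (Xb / 2),
      P X = P 0 + derivWithin P (Set.Icc 0 Xb) 0 * X) := by
  set S := Set.Icc (0:ℝ) Xb with hS
  set f := derivWithin P S with hf
  have hud : UniqueDiffOn ℝ S := uniqueDiffOn_Icc hXb
  have hcont : ContinuousOn f S := hP.continuousOn_derivWithin hud le_rfl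
  -- halving lemma
  have hhalf : ∀ Y ∈ Set.Ioc (0:ℝ) (Xb / 2), f Y = f (Y / 2) := by
    intro Y hY
    obtain ⟨hY0, hY2⟩ := hY
    have hY2' : Y / 2 ∈ Set.Ioc (0:ℝ) (Xb / 2) :=
      ⟨by linarith, by linarith⟩
    have h1 := hderiv Y ⟨hY0, hY2⟩
    have h2 := hderiv (Y/2) hY2'
    have hd := hdouble Y hY0.le (by linarith)
    have h2Y2 : 2 * (Y / 2) = Y := by ring
    rw [h2Y2] at h2
    rw [hf] at *
    rw [h1, h2, hd]
    field_simp
  -- iterate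
  have hiter : ∀ X ∈ Set.Ioc (0:ℝ) (Xb / 2), ∀ k : ℕ,
      X / 2 ^ k ∈ Set.Ioc (0:ℝ) (Xb / 2) ∧ f (X / 2 ^ k) = f X := by
    intro X hX k
    induction k with
    | zero => simpa using hX
    | succ n ih =>
      obtain ⟨hmem, heq⟩ := ih
      have hpos : (0:ℝ) < 2 ^ n := by positivity
      have hmem' : X / 2 ^ (n+1) ∈ Set.Ioc (0:ℝ) (Xb / 2) := by
        constructor
        · exact div_pos hX.1 (by positivity)
        · have : X / 2 ^ (n+1) ≤ X / 2 ^ n := by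
            apply div_le_div_of_nonneg_left hX.1.le hpos
            · exact pow_le_pow_right₀ (by norm_num) (Nat.le_succ n)
          exact this.trans hmem.2
      refine ⟨hmem', ?_⟩
      have : X / 2 ^ (n+1) = (X / 2 ^ n) / 2 := by ring
      rw [this, ← hhalf _ hmem, heq]
  -- first conclusion
  have hconst : ∀ X ∈ Set.Ioc (0:ℝ) (Xb / 2), f X = f 0 := by
    intro X hX
    have h0S : (0:ℝ) ∈ S := ⟨le_rfl, hXb.le⟩
    have hcw : ContinuousWithinAt f S 0 := hcont 0 h0S
    have htend0 : Filter.Tendsto (fun k : ℕ => X / 2 ^ k) Filter.atTop (nhds 0) := by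
      have : Filter.Tendsto (fun k : ℕ => X * (1/2:ℝ) ^ k) Filter.atTop (nhds (X * 0)) :=
        (tendsto_pow_atTop_nhds_zero_of_lt_one (by norm_num) (by norm_num)).const_mul X
      simpa [div_eq_mul_inv, inv_pow, mul_zero, one_div] using this
    have htend : Filter.Tendsto (fun k : ℕ => X / 2 ^ k) Filter.atTop (nhdsWithin 0 S) := by
      apply tendsto_nhdsWithin_of_tendsto_nhds_of_eventually_within _ htend0
      filter_upwards with k
      have h := (hiter X hX k).1
      exact ⟨h.1.le, h.2.trans (by linarith)⟩
    have h1 : Filter.Tendsto (fun k : ℕ => f (X / 2 ^ k)) Filter.atTop (nhds (f 0)) :=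
      hcw.tendsto.comp htend
    have h2 : (fun k : ℕ => f (X / 2 ^ k)) = fun _ => f X := by
      funext k; exact (hiter X hX k).2
    rw [h2] at h1
    exact tendsto_nhds_unique tendsto_const_nhds h1
  refine ⟨hconst, ?_⟩
  -- affine part
  set c := f 0 with hc
  have hXb2 : (0:ℝ) < Xb / 2 := by linarith
  set T := Set.Icc (0:ℝ) (Xb / 2) with hT
  have hTS : T ⊆ S := Set.Icc_subset_Icc le_rfl (by linarith)
  have hdiff : DifferentiableOn ℝ P S := hP.differentiableOn one_ne_zero
  set g := fun x : ℝ => P x - c * x with hg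
  have hgderiv : ∀ x ∈ Set.Ico (0:ℝ) (Xb / 2), derivWithin g T x = 0 := by
    intro x hx
    have hxT : x ∈ T := ⟨hx.1, hx.2.le⟩
    have hfx : f x = c := by
      rcases eq_or_lt_of_le hx.1 with h | h
      · rw [← h]
      · exact hconst x ⟨h, hx.2.le⟩
    have hP' : HasDerivWithinAt P c T x := by
      have h := (hdiff x (hTS hxT)).hasDerivWithinAt.mono hTS
      rwa [show derivWithin P S x = c from hfx] at h
    have hgd : HasDerivWithinAt g 0 T x := by
      have hlin : HasDerivWithinAt (fun y : ℝ => c * y) c T x := by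
        simpa using ((hasDerivAt_id x).const_mul c).hasDerivWithinAt
      have h := hP'.sub hlin
      rw [sub_self] at h
      exact h
    have hudT : UniqueDiffWithinAt ℝ T x := (uniqueDiffOn_Icc hXb2) x hxT
    exact hgd.derivWithin hudT
  have hgdiff : DifferentiableOn ℝ g T := by
    apply DifferentiableOn.sub (hdiff.mono hTS)
    exact (differentiable_id.const_mul c).differentiableOn
  have hconst' := constant_of_derivWithin_zero hgdiff hgderiv
  intro X hX
  have := hconst' X hX
  simp only [hg] at this
  have : P X - c * X = P 0 - c * 0 := this
  linarith [this]
end
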